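/- Let {x^k}, {y^k} be generated by Algorithm IRPNM with ρ ∈ (0,1), and for each k let x̄^k denote the unique minimizer of the strongly convex function Θ_k. Then for every k, ‖y^k − x̄^k‖ ≤ a₂⁻¹ η (1 + ‖G_k‖) r(x^k)^{1+τ−ρ}, where ‖G_k‖ is the spectral norm of G_k. -/

import Mathlib

open Set Metric Filter Bornology
open scoped RealInnerProductSpace Topology ENNReal

noncomputable section

/-- Euclidean space `ℝⁿ`. -/
abbrev Eu (n : ℕ) : Type := EuclideanSpace ℝ (Fin n)

/-- The convex subdifferential of an extended-real-valued function `g` at `x`. -/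
def subdiff {n : ℕ} (g : Eu n → EReal) (x : Eu n) : Set (Eu n) :=
  {v | ∀ z : Eu n, g x + ((⟪v, z - x⟫ : ℝ) : EReal) ≤ g z}

/-- `g` is proper: not identically `+∞` and nowhere `-∞`. -/
def ProperFun {n : ℕ} (g : Eu n → EReal) : Prop :=
  (∃ x, g x ≠ ⊤) ∧ ∀ x, g x ≠ ⊥

/-- `g` is convex. -/
def ConvexFun {n : ℕ} (g : Eu n → EReal) : Prop :=
  ∀ x z : Eu n, ∀ a c : ℝ, 0 ≤ a → 0 ≤ c → a + c = 1 →
    g (a • x + c • z) ≤ (a : EReal) * g x + (c : EReal) * g z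

/-- The effective domain of `g`. -/
def domg {n : ℕ} (g : Eu n → EReal) : Set (Eu n) := {x | g x ≠ ⊤}

/-- `prox` is the proximal mapping of `g` (with parameter 1). -/
def IsProxOf {n : ℕ} (g : Eu n → EReal) (prox : Eu n → Eu n) : Prop :=
  ∀ z u : Eu n,
    ((‖prox z - z‖ ^ 2 / 2 : ℝ) : EReal) + g (prox z)
      ≤ ((‖u - z‖ ^ 2 / 2 : ℝ) : EReal) + g u

/-- `f(x) = ψ(Ax - b)`. -/
def fval {n m : ℕ} (ψ : Eu m → ℝ) (A : Eu n →L[ℝ] Eu m) (b : Eu m) (x : Eu n) : ℝ :=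
  ψ (A x - b)

/-- `∇f(x) = Aᵀ ∇ψ(Ax - b)`. -/
def gradfval {n m : ℕ} (gradψ : Eu m → Eu m) (A : Eu n →L[ℝ] Eu m) (b : Eu m)
    (x : Eu n) : Eu n :=
  ContinuousLinearMap.adjoint A (gradψ (A x - b))

/-- `∇²f(x) = Aᵀ ∇²ψ(Ax - b) A`. -/
def hessfval {n m : ℕ} (hessψ : Eu m → (Eu m →L[ℝ] Eu m)) (A : Eu n →L[ℝ] Eu m) (b : Eu m)
    (x : Eu n) : Eu n →L[ℝ] Eu n :=
  (ContinuousLinearMap.adjoint A).comp ((hessψ (A x - b)).comp A)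

/-- `F = f + g`, extended-real-valued. -/
def Fval {n m : ℕ} (ψ : Eu m → ℝ) (A : Eu n →L[ℝ] Eu m) (b : Eu m) (g : Eu n → EReal)
    (x : Eu n) : EReal :=
  ((fval ψ A b x : ℝ) : EReal) + g x

/-- The residual mapping `R(x) = x - prox_g(x - ∇f(x))`. -/
def Rres {n m : ℕ} (gradψ : Eu m → Eu m) (A : Eu n →L[ℝ] Eu m) (b : Eu m)
    (prox : Eu n → Eu n) (x : Eu n) : Eu n :=
  x - prox (x - gradfval gradψ A b x)

/-- The KKT residual `r(x) = ‖R(x)‖`. -/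
def rres {n m : ℕ} (gradψ : Eu m → Eu m) (A : Eu n →L[ℝ] Eu m) (b : Eu m)
    (prox : Eu n → Eu n) (x : Eu n) : ℝ :=
  ‖Rres gradψ A b prox x‖

/-- The subdifferential `∂F(x) = ∇f(x) + ∂g(x)`. -/
def subF {n m : ℕ} (gradψ : Eu m → Eu m) (A : Eu n →L[ℝ] Eu m) (b : Eu m)
    (g : Eu n → EReal) (x : Eu n) : Set (Eu n) :=
  {u | u - gradfval gradψ A b x ∈ subdiff g x}

/-- The stationary point set `S* = {x : 0 ∈ ∂F(x)}`. -/
def SstarSet {n m : ℕ} (gradψ : Eu m → Eu m) (A : Eu n →L[ℝ] Eu m) (b : Eu m)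
    (g : Eu n → EReal) : Set (Eu n) :=
  {x | (0 : Eu n) ∈ subF gradψ A b g x}

/-- Smallest eigenvalue of a (self-adjoint) operator, via the Rayleigh quotient. -/
def lamMin {m : ℕ} (T : Eu m →L[ℝ] Eu m) : ℝ :=
  sInf ((fun v => ⟪T v, v⟫) '' Metric.sphere (0 : Eu m) 1)

/-- The strong stationary point set `X* = {x ∈ S* : ∇²ψ(Ax-b) ⪰ 0}`. -/
def XstarSet {n m : ℕ} (gradψ : Eu m → Eu m) (hessψ : Eu m → (Eu m →L[ℝ] Eu m))
    (A : Eu n →L[ℝ] Eu m) (b : Eu m) (g : Eu n → EReal) : Set (Eu n) :=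
  {x | x ∈ SstarSet gradψ A b g ∧ ∀ v : Eu m, 0 ≤ ⟪hessψ (A x - b) v, v⟫}

/-- `ψ` is twice continuously differentiable on `A(O) - b`, with gradient `gradψ`
and Hessian `hessψ` there. -/
def TwiceDiffOn {n m : ℕ} (ψ : Eu m → ℝ) (gradψ : Eu m → Eu m)
    (hessψ : Eu m → (Eu m →L[ℝ] Eu m)) (A : Eu n →L[ℝ] Eu m) (b : Eu m)
    (O : Set (Eu n)) : Prop :=
  (∀ u ∈ (fun z : Eu n => A z - b) '' O, HasGradientAt ψ (gradψ u) u) ∧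
  (∀ u ∈ (fun z : Eu n => A z - b) '' O, HasFDerivAt gradψ (hessψ u) u) ∧
  ContinuousOn gradψ ((fun z : Eu n => A z - b) '' O) ∧
  ContinuousOn hessψ ((fun z : Eu n => A z - b) '' O)

/-- Assumption 1.1 of the paper, together with the data of the proximal map of `g`. -/
def BasicAssumptions {n m : ℕ} (ψ : Eu m → ℝ) (gradψ : Eu m → Eu m)
    (hessψ : Eu m → (Eu m →L[ℝ] Eu m)) (A : Eu n →L[ℝ] Eu m) (b : Eu m)
    (g : Eu n → EReal) (prox : Eu n → Eu n) (O : Set (Eu n)) : Prop :=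
  IsOpen O ∧ domg g ⊆ O ∧ TwiceDiffOn ψ gradψ hessψ A b O ∧
  ProperFun g ∧ ConvexFun g ∧ LowerSemicontinuous g ∧ ContinuousOn g (domg g) ∧
  IsProxOf g prox ∧
  (∃ c : ℝ, ∀ x, (c : EReal) ≤ Fval ψ A b g x) ∧
  (∀ c : ℝ, Bornology.IsBounded {x | Fval ψ A b g x ≤ (c : EReal)})

/-- The regularized Hessian `G_k = ∇²f(x_k) + a₁ [−λ_min(∇²ψ(Ax_k−b))]₊ AᵀA + μ I`. -/
def GkOf {n m : ℕ} (hessψ : Eu m → (Eu m →L[ℝ] Eu m)) (A : Eu n →L[ℝ] Eu m) (b : Eu m)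
    (a₁ μ : ℝ) (xk : Eu n) : Eu n →L[ℝ] Eu n :=
  hessfval hessψ A b xk
    + (a₁ * max 0 (-(lamMin (hessψ (A xk - b))))) • ((ContinuousLinearMap.adjoint A).comp A)
    + μ • (ContinuousLinearMap.id ℝ (Eu n))

/-- `R_k(y) = y - prox_g(y - ∇f(x_k) - G(y - x_k))`. -/
def RkRes {n m : ℕ} (gradψ : Eu m → Eu m) (A : Eu n →L[ℝ] Eu m) (b : Eu m)
    (prox : Eu n → Eu n) (G : Eu n →L[ℝ] Eu n) (xk yy : Eu n) : Eu n :=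
  yy - prox (yy - gradfval gradψ A b xk - G (yy - xk))

/-- `r_k(y) = ‖R_k(y)‖`. -/
def rkRes {n m : ℕ} (gradψ : Eu m → Eu m) (A : Eu n →L[ℝ] Eu m) (b : Eu m)
    (prox : Eu n → Eu n) (G : Eu n →L[ℝ] Eu n) (xk yy : Eu n) : ℝ :=
  ‖RkRes gradψ A b prox G xk yy‖

/-- The subproblem objective
`Θ_k(x) = f(x_k) + ⟨∇f(x_k), x - x_k⟩ + (1/2)⟨x - x_k, G (x - x_k)⟩ + g(x)`. -/
def ThetaK {n m : ℕ} (ψ : Eu m → ℝ) (gradψ : Eu m → Eu m) (A : Eu n →L[ℝ] Eu m) (b : Eu m)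
    (g : Eu n → EReal) (G : Eu n →L[ℝ] Eu n) (xk x : Eu n) : EReal :=
  ((fval ψ A b xk + ⟪gradfval gradψ A b xk, x - xk⟫
      + ⟪x - xk, G (x - xk)⟫ / 2 : ℝ) : EReal) + g x

/-- The Armijo descent condition `F(x_k) - F(x_k + βᵐ d) ≥ σ βᵐ μ ‖d‖²`. -/
def ArmijoOK {n m : ℕ} (ψ : Eu m → ℝ) (A : Eu n →L[ℝ] Eu m) (b : Eu m) (g : Eu n → EReal)
    (σ β μ : ℝ) (xk dk : Eu n) (M : ℕ) : Prop :=
  Fval ψ A b g (xk + β ^ M • dk) + ((σ * β ^ M * μ * ‖dk‖ ^ 2 : ℝ) : EReal)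
    ≤ Fval ψ A b g xk

/-- `hessψ` is strictly continuous at `u0` relative to `S` with modulus `Lψ`. -/
def StrictContAt {m : ℕ} (hessψ : Eu m → (Eu m →L[ℝ] Eu m)) (S : Set (Eu m)) (u0 : Eu m)
    (Lψ : ℝ) : Prop :=
  0 ≤ Lψ ∧ ∃ δ₀ > (0 : ℝ), ∀ z ∈ Metric.closedBall u0 δ₀ ∩ S,
    ∀ z' ∈ Metric.closedBall u0 δ₀ ∩ S, ‖hessψ z - hessψ z'‖ ≤ Lψ * ‖z - z'‖

/-- The KL property of `F = f + g` at `xbar` (general desingularizing function `φ`). -/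
def KLatGen {n m : ℕ} (ψ : Eu m → ℝ) (gradψ : Eu m → Eu m) (A : Eu n →L[ℝ] Eu m) (b : Eu m)
    (g : Eu n → EReal) (xbar : Eu n) : Prop :=
  ∃ δ > (0 : ℝ), ∃ ϖ : EReal, 0 < ϖ ∧ ∃ φ dφ : ℝ → ℝ,
    φ 0 = 0 ∧
    ContinuousOn φ {t : ℝ | 0 ≤ t ∧ (t : EReal) < ϖ} ∧
    ConcaveOn ℝ {t : ℝ | 0 ≤ t ∧ (t : EReal) < ϖ} φ ∧
    (∀ t : ℝ, 0 < t → (t : EReal) < ϖ → HasDerivAt φ (dφ t) t ∧ 0 < dφ t) ∧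
    ∀ z ∈ Metric.closedBall xbar δ,
      Fval ψ A b g xbar < Fval ψ A b g z → Fval ψ A b g z < Fval ψ A b g xbar + ϖ →
        ∀ v ∈ subF gradψ A b g z,
          1 ≤ dφ ((Fval ψ A b g z - Fval ψ A b g xbar).toReal) * ‖v‖

/-- The KL property of `F = f + g` with exponent `θ` at `xbar`. -/
def KLexpAt {n m : ℕ} (ψ : Eu m → ℝ) (gradψ : Eu m → Eu m) (A : Eu n →L[ℝ] Eu m) (b : Eu m)
    (g : Eu n → EReal) (θ : ℝ) (xbar : Eu n) : Prop :=
  ∃ δ > (0 : ℝ), ∃ ϖ : EReal, 0 < ϖ ∧ ∃ c > (0 : ℝ),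
    ∀ z ∈ Metric.closedBall xbar δ,
      Fval ψ A b g xbar < Fval ψ A b g z → Fval ψ A b g z < Fval ψ A b g xbar + ϖ →
        ∀ v ∈ subF gradψ A b g z,
          1 ≤ c * (1 - θ) * ((Fval ψ A b g z - Fval ψ A b g xbar).toReal) ^ (-θ) * ‖v‖

end

noncomputable section

/-- The data and assumptions of Algorithm IRPNM (inexact regularized proximal Newton method),
producing an infinite sequence of iterates `x k` with `r(x k) > 0` for all `k`. -/
structure IRPNM (n m : ℕ) where
  ψ : Eu m → ℝ
  gradψ : Eu m → Eu m
  hessψ : Eu m → (Eu m →L[ℝ] Eu m)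
  A : Eu n →L[ℝ] Eu m
  b : Eu m
  g : Eu n → EReal
  prox : Eu n → Eu n
  O : Set (Eu n)
  a₁ : ℝ
  a₂ : ℝ
  ρ : ℝ
  τ : ℝ
  η : ℝ
  β : ℝ
  σ : ℝ
  x : ℕ → Eu n
  y : ℕ → Eu n
  d : ℕ → Eu n
  mik : ℕ → ℕ
  α : ℕ → ℝ
  basic : BasicAssumptions ψ gradψ hessψ A b g prox O
  ha₁ : 1 ≤ a₁
  ha₂ : 0 < a₂
  hρ : 0 ≤ ρ ∧ ρ < 1
  hτ : ρ ≤ τ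
  hη : 0 < η ∧ η < 1
  hβ : 0 < β ∧ β < 1
  hσ : 0 < σ ∧ σ < 1/2
  hxdom : ∀ k, x k ∈ domg g
  hydom : ∀ k, y k ∈ domg g
  hrpos : ∀ k, 0 < rres gradψ A b prox (x k)
  /-- the inexactness criterion (3.1), used when `ρ ∈ (0,1)` -/
  hinexact_pos : 0 < ρ → ∀ k,
    rkRes gradψ A b prox
        (GkOf hessψ A b a₁ (a₂ * (rres gradψ A b prox (x k)) ^ ρ) (x k)) (x k) (y k)
      ≤ η * min (rres gradψ A b prox (x k)) ((rres gradψ A b prox (x k)) ^ (1 + τ)) ∧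
    ThetaK ψ gradψ A b g (GkOf hessψ A b a₁ (a₂ * (rres gradψ A b prox (x k)) ^ ρ) (x k))
        (x k) (y k)
      ≤ ThetaK ψ gradψ A b g (GkOf hessψ A b a₁ (a₂ * (rres gradψ A b prox (x k)) ^ ρ) (x k))
        (x k) (x k)
  /-- the inexactness criterion (3.2), used when `ρ = 0`:
  `dist(0, ∂Θ_k(y k)) ≤ η r(x k)` and `Θ_k(y k) ≤ Θ_k(x k)` -/
  hinexact_zero : ρ = 0 → ∀ k,
    (∃ v ∈ subdiff g (y k),
        ‖gradfval gradψ A b (x k)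
            + (GkOf hessψ A b a₁ (a₂ * (rres gradψ A b prox (x k)) ^ ρ) (x k)) (y k - x k)
            + v‖
          ≤ η * rres gradψ A b prox (x k)) ∧
    ThetaK ψ gradψ A b g (GkOf hessψ A b a₁ (a₂ * (rres gradψ A b prox (x k)) ^ ρ) (x k))
        (x k) (y k)
      ≤ ThetaK ψ gradψ A b g (GkOf hessψ A b a₁ (a₂ * (rres gradψ A b prox (x k)) ^ ρ) (x k))
        (x k) (x k)
  hd : ∀ k, d k = y k - x k
  /-- `mk k` is the smallest nonnegative integer `M` satisfying the Armijo condition -/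
  hls : ∀ k,
    ArmijoOK ψ A b g σ β (a₂ * (rres gradψ A b prox (x k)) ^ ρ) (x k) (d k) (mik k) ∧
    ∀ M < mik k, ¬ ArmijoOK ψ A b g σ β (a₂ * (rres gradψ A b prox (x k)) ^ ρ) (x k) (d k) M
  hα : ∀ k, α k = β ^ (mik k)
  /-- the update rule (3.6) -/
  hupdate : ∀ k,
    (Fval ψ A b g (y k) < Fval ψ A b g (x k + α k • d k) ∧ x (k+1) = y k) ∨
    (¬ Fval ψ A b g (y k) < Fval ψ A b g (x k + α k • d k) ∧ x (k+1) = x k + α k • d k)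

end

/-!
Write `s = y^k - x̄^k` and `R = R_k(y^k) = y^k - u`, where `u` is the proximal point of
`w = y^k - ∇f(x^k) - G_k (y^k - x^k)`. Then `w - u ∈ ∂g(u)`, and first-order optimality of `x̄^k`
for `Θ_k` (whose quadratic part has gradient `∇f(x^k) + G_k(· - x^k)` because `G_k` is symmetric,
by Schwarz's theorem) gives `-(∇f(x^k) + G_k(x̄^k - x^k)) ∈ ∂g(x̄^k)`. The difference of these
subgradients is `R - G_k s` and `u - x̄^k = s - R`, so monotonicity of `∂g` yields
`⟪R - G_k s, s - R⟫ ≥ 0`. Together with `G_k ⪰ μ_k I` this gives `μ_k ‖s‖ ≤ (1 + ‖G_k‖) ‖R‖`, and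
the inexactness criterion `‖R‖ ≤ η r(x^k)^{1+τ}` with `μ_k = a₂ r(x^k)^ρ` concludes.
-/

theorem le_of_hasDerivAt_zero_of_mul_le_sub {φ : ℝ → ℝ} {c d : ℝ} (hφ : HasDerivAt φ d 0)
    (h : ∀ t ∈ Ioc (0 : ℝ) 1, t * c ≤ φ t - φ 0) : c ≤ d := by
  refine ge_of_tendsto hφ.tendsto_slope_zero_right ?_
  filter_upwards [Ioc_mem_nhdsGT one_pos] with t ht
  rw [zero_add, smul_eq_mul, le_inv_mul_iff₀ ht.1]
  exact h t ht

section InnerProductSpace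

variable {E : Type*} [NormedAddCommGroup E] [InnerProductSpace ℝ E]

theorem mul_norm_le_of_inner_nonneg {G : E →L[ℝ] E} {μ : ℝ} {s R : E}
    (hGμ : μ * ‖s‖ ^ 2 ≤ ⟪G s, s⟫) (hmono : 0 ≤ ⟪R - G s, s - R⟫) :
    μ * ‖s‖ ≤ (1 + ‖G‖) * ‖R‖ := by
  have hRs : ⟪R, s⟫ ≤ ‖R‖ * ‖s‖ := real_inner_le_norm R s
  have hGsR : ⟪G s, R⟫ ≤ ‖G‖ * ‖s‖ * ‖R‖ :=
    (real_inner_le_norm _ _).trans (mul_le_mul_of_nonneg_right (G.le_opNorm s) (norm_nonneg R))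
  have hexpand : ⟪R - G s, s - R⟫ = ⟪R, s⟫ - ‖R‖ ^ 2 - ⟪G s, s⟫ + ⟪G s, R⟫ := by
    simp only [inner_sub_left, inner_sub_right, real_inner_self_eq_norm_sq]
    ring
  have hsq : μ * ‖s‖ * ‖s‖ ≤ (1 + ‖G‖) * ‖R‖ * ‖s‖ := by nlinarith [sq_nonneg ‖R‖]
  rcases (norm_nonneg s).eq_or_lt with hs | hs
  · rw [← hs, mul_zero]
    positivity
  · exact le_of_mul_le_mul_right hsq hs

variable [CompleteSpace E]

theorem hasGradientAt_quadratic {G : E →L[ℝ] E} (hG : (G : E →ₗ[ℝ] E).IsSymmetric)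
    (c : ℝ) (L x₀ x : E) :
    HasGradientAt (fun z => c + ⟪L, z - x₀⟫ + ⟪z - x₀, G (z - x₀)⟫ / 2) (L + G (x - x₀)) x := by
  have hsub : HasFDerivAt (fun z : E => z - x₀) (ContinuousLinearMap.id ℝ E) x :=
    (hasFDerivAt_id x).sub_const x₀
  have h := (((hasFDerivAt_const c x).add
    ((hasFDerivAt_const L x).inner ℝ hsub)).add
    ((hsub.inner ℝ (G.hasFDerivAt.comp x hsub)).mul_const (2⁻¹ : ℝ)))
  rw [hasGradientAt_iff_hasFDerivAt]
  refine (h.congr_fderiv ?_).congr_of_eventuallyEq (Eventually.of_forall fun z => ?_)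
  · ext e
    have hsymm : ⟪x - x₀, G e⟫ = ⟪G (x - x₀), e⟫ := (hG _ _).symm
    simp only [map_sub] at hsymm
    simp only [zero_add, Function.comp_apply, map_sub, ContinuousLinearMap.comp_id, add_apply,
      ContinuousLinearMap.comp_apply, ContinuousLinearMap.prod_apply, zero_apply,
      ContinuousLinearMap.id_apply, fderivInnerCLM_apply, real_inner_comm e, inner_sub_right,
      inner_zero_left, sub_self, add_zero, smul_apply, hsymm, smul_eq_mul, map_add,
      InnerProductSpace.toDual_apply_apply, sub_apply, add_right_inj]
    ring
  · simp [div_eq_mul_inv]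

end InnerProductSpace

section Subdifferential

variable {n : ℕ} {g : Eu n → EReal}

theorem ConvexFun.apply_add_smul_sub_le (hconv : ConvexFun g) (hbot : ∀ x, g x ≠ ⊥)
    {x z : Eu n} (hx : g x ≠ ⊤) (hz : g z ≠ ⊤) {t : ℝ} (ht : t ∈ Icc (0 : ℝ) 1) :
    g (x + t • (z - x)) ≤ (((1 - t) * (g x).toReal + t * (g z).toReal : ℝ) : EReal) := by
  have hseg : x + t • (z - x) = (1 - t) • x + t • z := by module
  rw [hseg, EReal.coe_add, EReal.coe_mul, EReal.coe_mul, EReal.coe_toReal hx (hbot x),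
    EReal.coe_toReal hz (hbot z)]
  exact hconv x z (1 - t) t (by linarith [ht.2]) ht.1 (by ring)

theorem ProperFun.ne_top_of_forall_le (hg : ProperFun g) {h : Eu n → ℝ} {x : Eu n}
    (hmin : ∀ z, (h x : EReal) + g x ≤ h z + g z) : g x ≠ ⊤ := by
  obtain ⟨z, hz⟩ := hg.1
  intro htop
  have := hmin z
  rw [htop, EReal.coe_add_top, top_le_iff] at this
  exact EReal.add_ne_top (EReal.coe_ne_top _) hz this

theorem neg_mem_subdiff_of_forall_le {h : Eu n → ℝ} {x v : Eu n} (hconv : ConvexFun g)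
    (hbot : ∀ x, g x ≠ ⊥) (hx : g x ≠ ⊤) (hh : HasGradientAt h v x)
    (hmin : ∀ z, (h x : EReal) + g x ≤ h z + g z) : -v ∈ subdiff g x := by
  intro z
  rcases eq_or_ne (g z) ⊤ with hz | hz
  · simp [hz]
  rw [← EReal.coe_toReal hx (hbot x), ← EReal.coe_toReal hz (hbot z), ← EReal.coe_add,
    EReal.coe_le_coe_iff, inner_neg_left]
  have hline : HasDerivAt (fun t : ℝ => h (x + t • (z - x))) ⟪v, z - x⟫ 0 := by
    have hseg : HasDerivAt (fun t : ℝ => x + t • (z - x)) (z - x) 0 := by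
      simpa using ((hasDerivAt_id (0 : ℝ)).smul_const (z - x)).const_add x
    exact hh.hasFDerivAt.comp_hasDerivAt_of_eq 0 hseg (by simp)
  suffices (g x).toReal - (g z).toReal ≤ ⟪v, z - x⟫ by linarith
  refine le_of_hasDerivAt_zero_of_mul_le_sub hline fun t ht => ?_
  have hle := (hmin (x + t • (z - x))).trans
    (add_le_add_right (hconv.apply_add_smul_sub_le hbot hx hz (Ioc_subset_Icc_self ht)) _)
  rw [← EReal.coe_toReal hx (hbot x), EReal.toReal_coe, ← EReal.coe_add, ← EReal.coe_add,
    EReal.coe_le_coe_iff] at hle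
  simp only [zero_smul, add_zero]
  linarith

theorem inner_sub_sub_nonneg_of_mem_subdiff (hbot : ∀ x, g x ≠ ⊥) {x₁ x₂ v₁ v₂ : Eu n}
    (h₁ : g x₁ ≠ ⊤) (h₂ : g x₂ ≠ ⊤) (hv₁ : v₁ ∈ subdiff g x₁) (hv₂ : v₂ ∈ subdiff g x₂) :
    0 ≤ ⟪v₁ - v₂, x₁ - x₂⟫ := by
  have e₁ := hv₁ x₂
  have e₂ := hv₂ x₁
  rw [← EReal.coe_toReal h₁ (hbot x₁), ← EReal.coe_toReal h₂ (hbot x₂), ← EReal.coe_add,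
    EReal.coe_le_coe_iff] at e₁ e₂
  have hneg : ⟪v₁, x₂ - x₁⟫ = -⟪v₁, x₁ - x₂⟫ := by rw [← inner_neg_right, neg_sub]
  rw [inner_sub_left]
  linarith

theorem IsProxOf.apply_ne_top {prox : Eu n → Eu n} (hprox : IsProxOf g prox)
    (hg : ProperFun g) (w : Eu n) : g (prox w) ≠ ⊤ :=
  hg.ne_top_of_forall_le (h := fun u => ‖u - w‖ ^ 2 / 2) (hprox w)

theorem IsProxOf.sub_mem_subdiff {prox : Eu n → Eu n} (hprox : IsProxOf g prox)
    (hg : ProperFun g) (hconv : ConvexFun g) (w : Eu n) : w - prox w ∈ subdiff g (prox w) := by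
  have hgrad : HasGradientAt (fun u => ‖u - w‖ ^ 2 / 2) (prox w - w) (prox w) := by
    convert hasGradientAt_quadratic (G := .id ℝ (Eu n)) (fun _ _ => rfl) 0 0 w (prox w) using 1
    · funext u
      simp
    · simp
  simpa using neg_mem_subdiff_of_forall_le hconv hg.2 (hprox.apply_ne_top hg w) hgrad (hprox w)

end Subdifferential

section Subproblem

variable {n m : ℕ} {ψ : Eu m → ℝ} {gradψ : Eu m → Eu m} {A : Eu n →L[ℝ] Eu m} {b : Eu m}
  {g : Eu n → EReal} {G : Eu n →L[ℝ] Eu n} {xk xbar : Eu n}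

theorem ne_top_of_isMinimizer_thetaK (hg : ProperFun g)
    (hmin : ∀ z, ThetaK ψ gradψ A b g G xk xbar ≤ ThetaK ψ gradψ A b g G xk z) :
    g xbar ≠ ⊤ :=
  hg.ne_top_of_forall_le (h := fun z => fval ψ A b xk + ⟪gradfval gradψ A b xk, z - xk⟫
    + ⟪z - xk, G (z - xk)⟫ / 2) hmin

theorem neg_mem_subdiff_of_isMinimizer_thetaK (hg : ProperFun g) (hconv : ConvexFun g)
    (hG : (G : Eu n →ₗ[ℝ] Eu n).IsSymmetric)
    (hmin : ∀ z, ThetaK ψ gradψ A b g G xk xbar ≤ ThetaK ψ gradψ A b g G xk z) :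
    -(gradfval gradψ A b xk + G (xbar - xk)) ∈ subdiff g xbar :=
  neg_mem_subdiff_of_forall_le hconv hg.2 (ne_top_of_isMinimizer_thetaK hg hmin)
    (hasGradientAt_quadratic hG _ _ _ _) hmin

theorem mul_norm_sub_le_rkRes {prox : Eu n → Eu n} (hg : ProperFun g) (hconv : ConvexFun g)
    (hprox : IsProxOf g prox) (hG : (G : Eu n →ₗ[ℝ] Eu n).IsSymmetric) {μ : ℝ}
    (hGμ : ∀ w, μ * ‖w‖ ^ 2 ≤ ⟪G w, w⟫)
    (hmin : ∀ z, ThetaK ψ gradψ A b g G xk xbar ≤ ThetaK ψ gradψ A b g G xk z) (y : Eu n) :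
    μ * ‖y - xbar‖ ≤ (1 + ‖G‖) * rkRes gradψ A b prox G xk y := by
  set w := y - gradfval gradψ A b xk - G (y - xk)
  have hmono := inner_sub_sub_nonneg_of_mem_subdiff hg.2 (hprox.apply_ne_top hg w)
    (ne_top_of_isMinimizer_thetaK hg hmin) (hprox.sub_mem_subdiff hg hconv w)
    (neg_mem_subdiff_of_isMinimizer_thetaK hg hconv hG hmin)
  refine mul_norm_le_of_inner_nonneg (hGμ _) ?_
  convert hmono using 2
  · simp only [RkRes, w, map_sub]
    abel
  · simp only [RkRes, w]
    abel

end Subproblem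

section RegularizedHessian

variable {n m : ℕ}

theorem lamMin_mul_norm_sq_le (T : Eu m →L[ℝ] Eu m) (u : Eu m) :
    lamMin T * ‖u‖ ^ 2 ≤ ⟪T u, u⟫ := by
  rcases eq_or_ne u 0 with rfl | hu
  · simp
  have hbdd : BddBelow ((fun v => ⟪T v, v⟫) '' sphere (0 : Eu m) 1) := by
    refine ⟨-‖T‖, ?_⟩
    rintro _ ⟨v, hv, rfl⟩
    rw [mem_sphere_zero_iff_norm] at hv
    have := (abs_real_inner_le_norm (T v) v).trans
      (mul_le_mul_of_nonneg_right (T.le_opNorm v) (norm_nonneg v))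
    rw [hv, mul_one, mul_one] at this
    linarith [neg_abs_le ⟪T v, v⟫]
  have hunit : ‖u‖⁻¹ • u ∈ sphere (0 : Eu m) 1 := by
    rw [mem_sphere_zero_iff_norm, norm_smul, norm_inv, norm_norm,
      inv_mul_cancel₀ (norm_ne_zero_iff.mpr hu)]
  have hle : lamMin T ≤ ⟪T (‖u‖⁻¹ • u), ‖u‖⁻¹ • u⟫ := csInf_le hbdd ⟨_, hunit, rfl⟩
  rw [map_smul, real_inner_smul_left, real_inner_smul_right, ← mul_assoc, ← mul_inv,
    ← sq, le_inv_mul_iff₀ (by positivity)] at hle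
  linarith

variable {ψ : Eu m → ℝ} {gradψ : Eu m → Eu m} {hessψ : Eu m → (Eu m →L[ℝ] Eu m)}
  {A : Eu n →L[ℝ] Eu m} {b : Eu m} {O : Set (Eu n)}

/-- Schwarz's theorem is applied to `x ↦ ψ(Ax - b)`, not to `ψ`, which is only known to be twice
differentiable on `A(O) - b`. -/
theorem TwiceDiffOn.inner_hess_comm (hO : IsOpen O) (hdiff : TwiceDiffOn ψ gradψ hessψ A b O)
    {x : Eu n} (hx : x ∈ O) (v w : Eu n) :
    ⟪hessψ (A x - b) (A v), A w⟫ = ⟪hessψ (A x - b) (A w), A v⟫ := by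
  obtain ⟨hgrad, hhess, -, -⟩ := hdiff
  have haff : ∀ y : Eu n, HasFDerivAt (fun z => A z - b) A y := fun y => A.hasFDerivAt.sub_const b
  have hfirst : ∀ y ∈ O,
      HasFDerivAt (fun z => ψ (A z - b)) ((innerSL ℝ (gradψ (A y - b))).comp A) y := fun y hy =>
    (hgrad _ ⟨y, hy, rfl⟩).hasFDerivAt.comp y (haff y)
  have hsecond := ((innerSL ℝ).hasFDerivAt.comp x
    ((hhess _ ⟨x, hx, rfl⟩).comp x (haff x))).clm_comp (hasFDerivAt_const A x)
  have := second_derivative_symmetric_of_eventually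
    (Filter.eventually_of_mem (hO.mem_nhds hx) hfirst) hsecond v w
  simp only [Function.comp_apply, ContinuousLinearMap.comp_zero, zero_add,
    ContinuousLinearMap.comp_apply, ContinuousLinearMap.flip_apply,
    ContinuousLinearMap.compL_apply] at this
  exact this

theorem hessfval_isSymmetric (hO : IsOpen O) (hdiff : TwiceDiffOn ψ gradψ hessψ A b O)
    {x : Eu n} (hx : x ∈ O) : (hessfval hessψ A b x : Eu n →ₗ[ℝ] Eu n).IsSymmetric := by
  intro v w
  simp only [hessfval, ContinuousLinearMap.coe_coe, ContinuousLinearMap.comp_apply,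
    ContinuousLinearMap.adjoint_inner_left, ContinuousLinearMap.adjoint_inner_right]
  rw [hdiff.inner_hess_comm hO hx, real_inner_comm]

theorem GkOf_isSymmetric (hO : IsOpen O) (hdiff : TwiceDiffOn ψ gradψ hessψ A b O)
    {x : Eu n} (hx : x ∈ O) (a₁ μ : ℝ) :
    (GkOf hessψ A b a₁ μ x : Eu n →ₗ[ℝ] Eu n).IsSymmetric := by
  have hgram : ((ContinuousLinearMap.adjoint A).comp A : Eu n →ₗ[ℝ] Eu n).IsSymmetric :=
    fun v w => by simp [ContinuousLinearMap.adjoint_inner_left,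
      ContinuousLinearMap.adjoint_inner_right]
  simp only [GkOf, ContinuousLinearMap.toLinearMap_add, ContinuousLinearMap.toLinearMap_smul,
    ContinuousLinearMap.coe_id]
  exact ((hessfval_isSymmetric hO hdiff hx).add (hgram.smul rfl)).add
    (LinearMap.IsSymmetric.id.smul rfl)

theorem mul_norm_sq_le_inner_GkOf (hessψ : Eu m → (Eu m →L[ℝ] Eu m)) (A : Eu n →L[ℝ] Eu m)
    (b : Eu m) {a₁ : ℝ} (ha₁ : 1 ≤ a₁) (μ : ℝ) (x w : Eu n) :
    μ * ‖w‖ ^ 2 ≤ ⟪GkOf hessψ A b a₁ μ x w, w⟫ := by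
  set H := hessψ (A x - b)
  set c := max 0 (-lamMin H)
  have hexpand : ⟪GkOf hessψ A b a₁ μ x w, w⟫
      = ⟪H (A w), A w⟫ + a₁ * c * ‖A w‖ ^ 2 + μ * ‖w‖ ^ 2 := by
    simp [GkOf, hessfval, H, c, inner_add_left, real_inner_smul_left,
      ContinuousLinearMap.adjoint_inner_left]
  have hc : -lamMin H ≤ a₁ * c :=
    (le_max_right _ _).trans (le_mul_of_one_le_left (le_max_left _ _) ha₁)
  have := mul_le_mul_of_nonneg_right hc (sq_nonneg ‖A w‖)
  linarith [lamMin_mul_norm_sq_le H (A w)]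

end RegularizedHessian

/-- Lemma 4.2. For Algorithm IRPNM with `ρ ∈ (0,1)`, the unique
minimizer `x̄^k` of `Θ_k` satisfies
`‖y^k - x̄^k‖ ≤ a₂⁻¹ η (1 + ‖G_k‖) r(x^k)^{1+τ-ρ}` for every `k`. -/
theorem statement13 {n m : ℕ} (P : IRPNM n m) (hρ : 0 < P.ρ) (k : ℕ)
    (xbark : Eu n)
    (hmin : ∀ z : Eu n,
        ThetaK P.ψ P.gradψ P.A P.b P.g
            (GkOf P.hessψ P.A P.b P.a₁
              (P.a₂ * (rres P.gradψ P.A P.b P.prox (P.x k)) ^ P.ρ) (P.x k)) (P.x k) xbark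
          ≤ ThetaK P.ψ P.gradψ P.A P.b P.g
            (GkOf P.hessψ P.A P.b P.a₁
              (P.a₂ * (rres P.gradψ P.A P.b P.prox (P.x k)) ^ P.ρ) (P.x k)) (P.x k) z) :
    ‖P.y k - xbark‖
      ≤ P.a₂⁻¹ * P.η
        * (1 + ‖GkOf P.hessψ P.A P.b P.a₁
              (P.a₂ * (rres P.gradψ P.A P.b P.prox (P.x k)) ^ P.ρ) (P.x k)‖)
        * (rres P.gradψ P.A P.b P.prox (P.x k)) ^ (1 + P.τ - P.ρ) := by
  obtain ⟨hO, hdom, hdiff, hproper, hconv, -, -, hprox, -, -⟩ := P.basic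
  set r := rres P.gradψ P.A P.b P.prox (P.x k)
  set G := GkOf P.hessψ P.A P.b P.a₁ (P.a₂ * r ^ P.ρ) (P.x k)
  have hr : 0 < r := P.hrpos k
  have hμ : 0 < P.a₂ * r ^ P.ρ := mul_pos P.ha₂ (Real.rpow_pos_of_pos hr _)
  have hbound := mul_norm_sub_le_rkRes hproper hconv hprox
    (GkOf_isSymmetric hO hdiff (hdom (P.hxdom k)) _ _)
    (mul_norm_sq_le_inner_GkOf _ _ _ P.ha₁ _ _) hmin (P.y k)
  have hres : rkRes P.gradψ P.A P.b P.prox G (P.x k) (P.y k) ≤ P.η * r ^ (1 + P.τ) :=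
    (P.hinexact_pos hρ k).1.trans (mul_le_mul_of_nonneg_left (min_le_right _ _) P.hη.1.le)
  have hsplit : r ^ (1 + P.τ) = r ^ P.ρ * r ^ (1 + P.τ - P.ρ) := by
    rw [← Real.rpow_add hr, add_sub_cancel]
  have ha₂ := P.ha₂.ne'
  calc ‖P.y k - xbark‖ = (P.a₂ * r ^ P.ρ)⁻¹ * (P.a₂ * r ^ P.ρ * ‖P.y k - xbark‖) := by
        field_simp
    _ ≤ (P.a₂ * r ^ P.ρ)⁻¹ * ((1 + ‖G‖) * (P.η * r ^ (1 + P.τ))) := by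
        refine mul_le_mul_of_nonneg_left (hbound.trans ?_) (inv_pos.mpr hμ).le
        exact mul_le_mul_of_nonneg_left hres (by positivity)
    _ = P.a₂⁻¹ * P.η * (1 + ‖G‖) * r ^ (1 + P.τ - P.ρ) := by
        rw [hsplit]
        field_simp
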